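/- Let C be a small category with pullbacks equipped with a Grothendieck pretopology, let F be a presheaf of groupoids on C, and let sh F be the sheafification of F, i.e. the sheaf of groupoids whose presheaf of objects and presheaf of morphisms are the sheafifications of those of F. Then the canonical map F → sh F satisfies the local lifting conditions (L1), (L2), (L3), and hence induces an isomorphism on sheaves of homotopy groups. -/

import Mathlib

set_option linter.unusedSectionVars false

open CategoryTheory Opposite Limits

universe u

variable {C : Type u} [Category.{u} C] [HasPullbacks C]

section Pi0Aut

variable {F G : Cᵒᵖ ⥤ Grpd.{u, u}}

lemma grpd_map_obj_id (F : Cᵒᵖ ⥤ Grpd.{u, u}) (X : Cᵒᵖ) (a : F.obj X) :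
    (F.map (𝟙 X)).obj a = a := by rw [F.map_id]; rfl

lemma grpd_map_obj_comp (F : Cᵒᵖ ⥤ Grpd.{u, u}) {X Y Z : Cᵒᵖ} (g : X ⟶ Y) (h : Y ⟶ Z)
    (a : F.obj X) : (F.map (g ≫ h)).obj a = (F.map h).obj ((F.map g).obj a) := by
  rw [F.map_comp]; rfl

lemma res_res (F : Cᵒᵖ ⥤ Grpd.{u, u}) {V W T : C} (g : V ⟶ W) (h : W ⟶ T)
    (x : F.obj (op T)) :
    (F.map g.op).obj ((F.map h.op).obj x) = (F.map (g ≫ h).op).obj x := by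
  rw [op_comp, F.map_comp]; rfl

lemma nat_obj_eq (φ : F ⟶ G) {X Y : C} (h : Y ⟶ X) (a : F.obj (op X)) :
    (φ.app (op Y)).obj ((F.map h.op).obj a) = (G.map h.op).obj ((φ.app (op X)).obj a) :=
  congrArg (fun Φ : ↑(F.obj (op X)) ⥤ ↑(G.obj (op Y)) => Φ.obj a) (φ.naturality h.op)

/-- The presheaf `π₀F` of isomorphism classes of a presheaf of groupoids. -/
def pi0 (F : Cᵒᵖ ⥤ Grpd.{u, u}) : Cᵒᵖ ⥤ Type u where
  obj X := Quot (fun a b : F.obj X => Nonempty (a ≅ b))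
  map {X Y} g := TypeCat.ofHom (Quot.map (F.map g).obj
    (fun a b e => e.elim fun e => ⟨(F.map g).mapIso e⟩))
  map_id X := by
    ext q
    obtain ⟨a⟩ := q
    exact congrArg (Quot.mk _) (grpd_map_obj_id F X a)
  map_comp {X Y Z} g h := by
    ext q
    obtain ⟨a⟩ := q
    exact congrArg (Quot.mk _) (grpd_map_obj_comp F g h a)

/-- The map induced on `π₀` by a map of presheaves of groupoids. -/
def pi0Map (φ : F ⟶ G) : pi0 F ⟶ pi0 G where
  app X := TypeCat.ofHom (Quot.map (φ.app X).obj
    (fun a b e => e.elim fun e => ⟨(φ.app X).mapIso e⟩))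
  naturality X Y g := by
    ext q
    obtain ⟨a⟩ := q
    exact congrArg (Quot.mk _)
      (congrArg (fun Φ : ↑(F.obj X) ⥤ ↑(G.obj Y) => Φ.obj a) (φ.naturality g))

lemma aut_eq (F : Cᵒᵖ ⥤ Grpd.{u, u}) {X : C} (a : F.obj (op X)) {g g' : (Over X)ᵒᵖ}
    (h : g ⟶ g') :
    (F.map g'.unop.hom.op).obj a =
      (F.map h.unop.left.op).obj ((F.map g.unop.hom.op).obj a) := by
  rw [res_res, Over.w h.unop]

/-- The presheaf of automorphism groups `Aut_F(a)` on `C/X`, for `a ∈ F(X)` (in a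
groupoid, the endomorphisms of an object are exactly its automorphisms). -/
def autPre (F : Cᵒᵖ ⥤ Grpd.{u, u}) (X : C) (a : F.obj (op X)) : (Over X)ᵒᵖ ⥤ Type u where
  obj g := ((F.map g.unop.hom.op).obj a ⟶ (F.map g.unop.hom.op).obj a)
  map {g g'} h := TypeCat.ofHom fun e =>
    eqToHom (aut_eq F a h) ≫ (F.map h.unop.left.op).map e ≫ eqToHom (aut_eq F a h).symm
  map_id := by
    intro g
    refine ConcreteCategory.hom_ext _ _ fun e => ?_
    change eqToHom _ ≫ (F.map _).map e ≫ eqToHom _ = e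
    have h : (𝟙 g : g ⟶ g).unop.left = 𝟙 g.unop.left := rfl
    have h2 := Functor.congr_hom (show F.map ((𝟙 g : g ⟶ g).unop.left.op) = 𝟙 _ by
      rw [h, op_id, F.map_id]) e
    simp only [h2, eqToHom_trans]
    simp only [show ((𝟙 (F.obj (op g.unop.left)) : _ ⟶ _)).map e = e from rfl]
    simp
  map_comp := by
    intro g g' g'' h h'
    refine ConcreteCategory.hom_ext _ _ fun e => ?_
    change eqToHom _ ≫ (F.map _).map e ≫ eqToHom _ = eqToHom _ ≫ (F.map _).map (eqToHom _ ≫ (F.map _).map e ≫ eqToHom _) ≫ eqToHom _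
    have h2 := Functor.congr_hom (show F.map ((h ≫ h').unop.left.op)
        = F.map h.unop.left.op ≫ F.map h'.unop.left.op by
      rw [show (h ≫ h').unop.left = h'.unop.left ≫ h.unop.left from rfl, op_comp,
        F.map_comp]) e
    simp only [types_comp_apply, h2]
    rw [show ∀ {A B : ↑(F.obj (op g.unop.left))} (x : A ⟶ B),
        ((F.map h.unop.left.op ≫ F.map h'.unop.left.op)).map x
        = (F.map h'.unop.left.op).map ((F.map h.unop.left.op).map x) from fun _ => rfl]
    simp [eqToHom_map]

/-- The map induced by `φ : F ⟶ G` on automorphism presheaves. -/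
def autMap (φ : F ⟶ G) (X : C) (a : F.obj (op X)) :
    autPre F X a ⟶ autPre G X ((φ.app (op X)).obj a) where
  app g := TypeCat.ofHom fun e =>
    eqToHom (nat_obj_eq φ g.unop.hom a).symm ≫ (φ.app (op g.unop.left)).map e ≫
      eqToHom (nat_obj_eq φ g.unop.hom a)
  naturality := by
    intro g g' h
    refine ConcreteCategory.hom_ext _ _ fun e => ?_
    change eqToHom _ ≫ (φ.app _).map (eqToHom _ ≫ (F.map _).map e ≫ eqToHom _) ≫ eqToHom _ = eqToHom _ ≫ (G.map _).map (eqToHom _ ≫ (φ.app _).map e ≫ eqToHom _) ≫ eqToHom _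
    have h2 := Functor.congr_hom (φ.naturality h.unop.left.op) e
    erw [show ∀ {A B : ↑(F.obj (op g.unop.left))} (x : A ⟶ B),
        ((F.map h.unop.left.op ≫ φ.app (op g'.unop.left))).map x
        = (φ.app (op g'.unop.left)).map ((F.map h.unop.left.op).map x) from fun _ => rfl] at h2
    erw [show ∀ {A B : ↑(F.obj (op g.unop.left))} (x : A ⟶ B),
        ((φ.app (op g.unop.left) ≫ G.map h.unop.left.op)).map x
        = (G.map h.unop.left.op).map ((φ.app (op g.unop.left)).map x) from fun _ => rfl] at h2
    simp [h2, eqToHom_map]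

variable (K : Pretopology C)

/-- A map of presheaves of groupoids induces an isomorphism on sheaves of homotopy
groups if the sheafification of `π₀φ` is an isomorphism and, for every `X` and every
object `a` of `F(X)`, the sheafification of `Aut_F(a) ⟶ Aut_G(φ(a))` is an
isomorphism of sheaves on `C/X`. -/
def InducesIsoOnHomotopySheaves (φ : F ⟶ G) : Prop :=
  IsIso ((presheafToSheaf (K.toGrothendieck) (Type u)).map (pi0Map φ)) ∧
  ∀ (X : C) (a : F.obj (op X)),
    IsIso ((presheafToSheaf ((K.toGrothendieck).over X) (Type u)).map (autMap φ X a))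

/-- The local lifting conditions (L1), (L2), (L3) for a map of presheaves of
groupoids. -/
structure LocalLiftingConditions (φ : F ⟶ G) : Prop where
  obj_lift : ∀ (X : C) (b : G.obj (op X)),
    ∃ (ι : Type u) (V : ι → C) (g : ∀ i, V i ⟶ X),
      Presieve.ofArrows V g ∈ K.coverings X ∧
      ∀ i, ∃ a : F.obj (op (V i)),
        Nonempty ((φ.app (op (V i))).obj a ≅ (G.map (g i).op).obj b)
  hom_lift : ∀ (X : C) (a a' : F.obj (op X))
    (k : (φ.app (op X)).obj a ⟶ (φ.app (op X)).obj a'),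
    ∃ (ι : Type u) (V : ι → C) (g : ∀ i, V i ⟶ X),
      Presieve.ofArrows V g ∈ K.coverings X ∧
      ∀ i, ∃ h : (F.map (g i).op).obj a ⟶ (F.map (g i).op).obj a',
        (φ.app (op (V i))).map h =
          eqToHom (nat_obj_eq φ (g i) a) ≫ (G.map (g i).op).map k ≫
            eqToHom (nat_obj_eq φ (g i) a').symm
  hom_sep : ∀ (X : C) (a : F.obj (op X)) (h : a ⟶ a),
    (φ.app (op X)).map h = 𝟙 ((φ.app (op X)).obj a) →
    ∃ (ι : Type u) (V : ι → C) (g : ∀ i, V i ⟶ X),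
      Presieve.ofArrows V g ∈ K.coverings X ∧
      ∀ i, (F.map (g i).op).map h = 𝟙 ((F.map (g i).op).obj a)

end Pi0Aut

section ObMor

variable {F G : Cᵒᵖ ⥤ Grpd.{u, u}}

/-- The presheaf of objects of a presheaf of groupoids. -/
def obPresheaf (F : Cᵒᵖ ⥤ Grpd.{u, u}) : Cᵒᵖ ⥤ Type u where
  obj X := F.obj X
  map g := TypeCat.ofHom (F.map g).obj
  map_id X := by ext a; exact grpd_map_obj_id F X a
  map_comp g h := by ext a; exact grpd_map_obj_comp F g h a

lemma sigma_hom_ext {A : Type u} [Groupoid.{u} A] {a b a' b' : A} (f : a ⟶ b)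
    (g : a' ⟶ b') (ha : a = a') (hb : b = b')
    (hfg : f = eqToHom ha ≫ g ≫ eqToHom hb.symm) :
    (⟨(a, b), f⟩ : Σ ab : A × A, ab.1 ⟶ ab.2) = ⟨(a', b'), g⟩ := by
  subst ha; subst hb; simp at hfg; subst hfg; rfl

/-- The presheaf of morphisms of a presheaf of groupoids. -/
def morPresheaf (F : Cᵒᵖ ⥤ Grpd.{u, u}) : Cᵒᵖ ⥤ Type u where
  obj X := Σ ab : ↑(F.obj X) × ↑(F.obj X), ab.1 ⟶ ab.2
  map {X Y} g := TypeCat.ofHom fun m => ⟨((F.map g).obj m.1.1, (F.map g).obj m.1.2), (F.map g).map m.2⟩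
  map_id X := by
    refine ConcreteCategory.hom_ext _ _ fun m => ?_
    obtain ⟨⟨a, b⟩, f⟩ := m
    exact sigma_hom_ext _ _ (grpd_map_obj_id F X a) (grpd_map_obj_id F X b)
      (Functor.congr_hom (F.map_id X) f)
  map_comp {X Y Z} g h := by
    refine ConcreteCategory.hom_ext _ _ fun m => ?_
    obtain ⟨⟨a, b⟩, f⟩ := m
    exact sigma_hom_ext _ _ (grpd_map_obj_comp F g h a) (grpd_map_obj_comp F g h b)
      (Functor.congr_hom (F.map_comp g h) f)

/-- The map induced on presheaves of objects. -/
def obMap (φ : F ⟶ G) : obPresheaf F ⟶ obPresheaf G where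
  app X := TypeCat.ofHom (φ.app X).obj
  naturality X Y g := by
    ext a
    exact congrArg (fun Φ : ↑(F.obj X) ⥤ ↑(G.obj Y) => Φ.obj a) (φ.naturality g)

/-- The map induced on presheaves of morphisms. -/
def morMap (φ : F ⟶ G) : morPresheaf F ⟶ morPresheaf G where
  app X := TypeCat.ofHom fun m => ⟨((φ.app X).obj m.1.1, (φ.app X).obj m.1.2), (φ.app X).map m.2⟩
  naturality X Y g := by
    refine ConcreteCategory.hom_ext _ _ fun m => ?_
    obtain ⟨⟨a, b⟩, f⟩ := m
    exact sigma_hom_ext _ _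
      (congrArg (fun Φ : ↑(F.obj X) ⥤ ↑(G.obj Y) => Φ.obj a) (φ.naturality g))
      (congrArg (fun Φ : ↑(F.obj X) ⥤ ↑(G.obj Y) => Φ.obj b) (φ.naturality g))
      (Functor.congr_hom (φ.naturality g) f)

end ObMor

/-- A morphism of presheaves (of sets) exhibits its target as the sheafification of
its source if the target is a sheaf and every map to a sheaf factors uniquely
through it. -/
def IsSheafificationMap (J : GrothendieckTopology C) {P Q : Cᵒᵖ ⥤ Type u}
    (η : P ⟶ Q) : Prop :=
  Presieve.IsSheaf J Q ∧
    ∀ S : Cᵒᵖ ⥤ Type u, Presieve.IsSheaf J S →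
      ∀ χ : P ⟶ S, ∃! χ' : Q ⟶ S, η ≫ χ' = χ

/-!
A map of presheaves of sets is a sheafification map exactly when it is locally injective and
locally surjective. For the maps induced by `η` on objects and on morphisms this yields (L1)
(local surjectivity on objects), (L3) (local injectivity on morphisms) and (L2): a morphism
`k : η a ⟶ η a'` lifts locally to some morphism `c ⟶ d` of `F`, and local injectivity on objects
makes `c` and `d` agree with `a` and `a'` on a finer cover. Conversely, (L1)–(L3) for any map `φ`
make `π₀ φ` and the maps `Aut_F(a) ⟶ Aut_G(φ a)` locally surjective and locally
injective, so they become isomorphisms after sheafification.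
-/

lemma Sigma.exists_eq_mk_of_fst_eq {α : Type*} {β : α → Type*} (x : Sigma β) {a : α}
    (h : x.1 = a) : ∃ b : β a, x = ⟨a, b⟩ := by
  subst h
  exact ⟨x.2, rfl⟩

lemma sigma_hom_mk_eq_iff {A : Type u} [Groupoid.{u} A] {a b a' b' : A} {f : a ⟶ b}
    {g : a' ⟶ b'} : (⟨(a, b), f⟩ : Σ ab : A × A, ab.1 ⟶ ab.2) = ⟨(a', b'), g⟩ ↔
      ∃ (ha : a = a') (hb : b = b'), f = eqToHom ha ≫ g ≫ eqToHom hb.symm := by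
  refine ⟨fun h => ?_, fun ⟨ha, hb, hfg⟩ => sigma_hom_ext f g ha hb hfg⟩
  obtain ⟨⟨⟩, hfg⟩ := Sigma.mk.inj_iff.mp h
  cases hfg
  exact ⟨rfl, rfl, by simp⟩

lemma CategoryTheory.Functor.map_comp_inv_eq_id_iff {A B : Type*} [Groupoid A] [Groupoid B]
    (Φ : A ⥤ B) {a b : A} (s t : a ⟶ b) :
    Φ.map (s ≫ Groupoid.inv t) = 𝟙 (Φ.obj a) ↔ Φ.map s = Φ.map t := by
  rw [Groupoid.inv_eq_inv, Φ.map_comp, Φ.map_inv, comp_inv_eq_id]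

lemma IsSheafificationMap.W {J : GrothendieckTopology C} {P Q : Cᵒᵖ ⥤ Type u} {f : P ⟶ Q}
    (h : IsSheafificationMap J f) : J.W f := by
  intro S hS
  have hS' : Presieve.IsSheaf J S := (isSheaf_iff_isSheaf_of_type J S).mp hS
  constructor
  · intro χ₁ χ₂ he
    obtain ⟨χ, -, hχ⟩ := h.2 S hS' (f ≫ χ₁)
    exact (hχ χ₁ rfl).trans (hχ χ₂ he.symm).symm
  · intro χ
    obtain ⟨χ', hχ', -⟩ := h.2 S hS' χ
    exact ⟨χ', hχ'⟩

lemma isIso_presheafToSheaf_map_of_isLocallyBijective (J : GrothendieckTopology C)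
    {P Q : Cᵒᵖ ⥤ Type u} (f : P ⟶ Q) [Presheaf.IsLocallyInjective J f]
    [Presheaf.IsLocallySurjective J f] : IsIso ((presheafToSheaf J (Type u)).map f) :=
  (J.W_iff f).mp (J.W_of_isLocallyBijective f)

namespace CategoryTheory.Pretopology

variable (K : Pretopology C)

lemma exists_covering_of_exists_sieve {X : C} {P : ∀ ⦃Y : C⦄, (Y ⟶ X) → Prop}
    (h : ∃ T ∈ K.toGrothendieck X, ∀ ⦃Y : C⦄ (f : Y ⟶ X), T f → P f) :
    ∃ (ι : Type u) (V : ι → C) (g : ∀ i, V i ⟶ X),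
      Presieve.ofArrows V g ∈ K.coverings X ∧ ∀ i, P (g i) := by
  obtain ⟨T, ⟨R, hR, hRT⟩, hP⟩ := h
  obtain ⟨ι, V, g, rfl⟩ := R.exists_eq_ofArrows
  exact ⟨ι, V, g, hR, fun i => hP _ (hRT _ _ (Presieve.ofArrows.mk i))⟩

variable {K}

lemma mem_toGrothendieck_of_ofArrows {X : C} {ι : Type*} {V : ι → C} {g : ∀ i, V i ⟶ X}
    (hg : Presieve.ofArrows V g ∈ K.coverings X) {S : Sieve X} (hS : ∀ i, S (g i)) :
    S ∈ K.toGrothendieck X :=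
  ⟨_, hg, fun _ _ ⟨i⟩ => hS i⟩

lemma mem_over_toGrothendieck_of_ofArrows {X : C} {U : Over X} {ι : Type*} {V : ι → C}
    {g : ∀ i, V i ⟶ U.left} (hg : Presieve.ofArrows V g ∈ K.coverings U.left) {S : Sieve U}
    (hS : ∀ i, S (Over.homMk (g i) : Over.mk (g i ≫ U.hom) ⟶ U)) :
    S ∈ (K.toGrothendieck).over X U :=
  mem_toGrothendieck_of_ofArrows hg fun i => (Sieve.overEquiv_iff S (g i)).mpr (hS i)

end CategoryTheory.Pretopology

section Sheafification

open Presheaf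

variable {J : GrothendieckTopology C} {F G : Cᵒᵖ ⥤ Grpd.{u, u}} (η : F ⟶ G)

lemma exists_sieve_obj_lift [IsLocallySurjective J (obMap η)] (X : C) (b : G.obj (op X)) :
    ∃ T ∈ J X, ∀ ⦃Y : C⦄ (f : Y ⟶ X), T f →
      ∃ a : F.obj (op Y), Nonempty ((η.app (op Y)).obj a ≅ (G.map f.op).obj b) := by
  refine ⟨_, imageSieve_mem J (obMap η) (U := op X) b, ?_⟩
  rintro Y f ⟨a, ha⟩
  exact ⟨a, ⟨eqToIso ha⟩⟩

lemma exists_sieve_hom_lift [IsLocallySurjective J (morMap η)] [IsLocallyInjective J (obMap η)]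
    (X : C) (a a' : F.obj (op X)) (k : (η.app (op X)).obj a ⟶ (η.app (op X)).obj a') :
    ∃ T ∈ J X, ∀ ⦃Y : C⦄ (f : Y ⟶ X), T f →
      ∃ h : (F.map f.op).obj a ⟶ (F.map f.op).obj a',
        (η.app (op Y)).map h =
          eqToHom (nat_obj_eq η f a) ≫ (G.map f.op).map k ≫
            eqToHom (nat_obj_eq η f a').symm := by
  let m : (morPresheaf G).obj (op X) := ⟨(_, _), k⟩
  suffices ∃ T ∈ J X, ∀ ⦃Y : C⦄ (f : Y ⟶ X), T f →
      ∃ h : (F.map f.op).obj a ⟶ (F.map f.op).obj a',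
        (morMap η).app (op Y) ⟨(_, _), h⟩ = (morPresheaf G).map f.op m by
    obtain ⟨T, hT, hlift⟩ := this
    refine ⟨T, hT, fun Y f hf => ?_⟩
    obtain ⟨h, hh⟩ := hlift f hf
    obtain ⟨_, _, hh⟩ := sigma_hom_mk_eq_iff.mp hh
    exact ⟨h, hh⟩
  choose t ht using fun Y (f : Y ⟶ X) (hf : imageSieve (morMap η) m f) => hf
  refine ⟨Sieve.bind (imageSieve (morMap η) m).arrows fun Y f hf =>
      equalizerSieve (F := obPresheaf F) (t Y f hf).1.1 ((F.map f.op).obj a) ⊓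
        equalizerSieve (F := obPresheaf F) (t Y f hf).1.2 ((F.map f.op).obj a'),
    J.bind_covering (imageSieve_mem J (morMap η) (U := op X) m) fun Y f hf =>
      J.intersection_covering ?_ ?_, ?_⟩
  · exact equalizerSieve_mem J (obMap η) _ _
      ((congrArg (fun x => x.1.1) (ht Y f hf)).trans (nat_obj_eq η f a).symm)
  · exact equalizerSieve_mem J (obMap η) _ _
      ((congrArg (fun x => x.1.2) (ht Y f hf)).trans (nat_obj_eq η f a').symm)
  · rintro Z _ ⟨Y, g, f, hf, ⟨h₁, h₂⟩, rfl⟩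
    obtain ⟨h, hh⟩ := Sigma.exists_eq_mk_of_fst_eq ((morPresheaf F).map g.op (t Y f hf))
      (a := ((F.map (g ≫ f).op).obj a, (F.map (g ≫ f).op).obj a'))
      (Prod.ext (h₁.trans (res_res F g f a)) (h₂.trans (res_res F g f a')))
    refine ⟨h, ?_⟩
    rw [← hh, NatTrans.naturality_apply, ht, ← Functor.map_comp_apply]
    rfl

lemma exists_sieve_hom_sep [IsLocallyInjective J (morMap η)] (X : C) (a : F.obj (op X))
    (h : a ⟶ a) (hh : (η.app (op X)).map h = 𝟙 ((η.app (op X)).obj a)) :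
    ∃ T ∈ J X, ∀ ⦃Y : C⦄ (f : Y ⟶ X), T f → (F.map f.op).map h = 𝟙 ((F.map f.op).obj a) := by
  have hη : (morMap η).app (op X) ⟨(a, a), h⟩ = (morMap η).app (op X) ⟨(a, a), 𝟙 a⟩ :=
    sigma_hom_ext _ _ rfl rfl (by simpa using hh)
  refine ⟨_, equalizerSieve_mem J (morMap η) _ _ hη, fun Y f hf => ?_⟩
  obtain ⟨_, _, hhf⟩ := sigma_hom_mk_eq_iff.mp hf
  simpa using hhf

theorem localLiftingConditions_of_isLocallyBijective (K : Pretopology C)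
    [IsLocallySurjective K.toGrothendieck (obMap η)] [IsLocallyInjective K.toGrothendieck (obMap η)]
    [IsLocallySurjective K.toGrothendieck (morMap η)]
    [IsLocallyInjective K.toGrothendieck (morMap η)] :
    LocalLiftingConditions K η where
  obj_lift X b := K.exists_covering_of_exists_sieve (exists_sieve_obj_lift η X b)
  hom_lift X a a' k := K.exists_covering_of_exists_sieve (exists_sieve_hom_lift η X a a' k)
  hom_sep X a h hh := K.exists_covering_of_exists_sieve (exists_sieve_hom_sep η X a h hh)

end Sheafification

namespace LocalLiftingConditions

open Presheaf

variable {K : Pretopology C} {F G : Cᵒᵖ ⥤ Grpd.{u, u}} {φ : F ⟶ G}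
  (hφ : LocalLiftingConditions K φ)
include hφ

lemma pi0Map_isLocallySurjective : IsLocallySurjective K.toGrothendieck (pi0Map φ) where
  imageSieve_mem {U} q := by
    obtain ⟨b⟩ := q
    obtain ⟨ι, V, g, hg, hlift⟩ := hφ.obj_lift U b
    refine Pretopology.mem_toGrothendieck_of_ofArrows hg fun i => ?_
    obtain ⟨a, ⟨e⟩⟩ := hlift i
    exact ⟨Quot.mk _ a, Quot.sound ⟨e⟩⟩

lemma pi0Map_isLocallyInjective : IsLocallyInjective K.toGrothendieck (pi0Map φ) where
  equalizerSieve_mem {U} x y hxy := by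
    obtain ⟨a⟩ := x
    obtain ⟨a'⟩ := y
    obtain ⟨e⟩ := ((isIsomorphicSetoid _).iseqv.quot_mk_eq_iff _ _).mp hxy
    obtain ⟨ι, V, g, hg, hlift⟩ := hφ.hom_lift U.unop a a' e.hom
    refine Pretopology.mem_toGrothendieck_of_ofArrows hg fun i => ?_
    obtain ⟨h, -⟩ := hlift i
    exact Quot.sound ⟨asIso h⟩

lemma autMap_isLocallySurjective (X : C) (a : F.obj (op X)) :
    IsLocallySurjective (K.toGrothendieck.over X) (autMap φ X a) where
  imageSieve_mem {U} s := by
    change (G.map U.hom.op).obj ((φ.app (op X)).obj a) ⟶ _ at s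
    obtain ⟨ι, V, g, hg, hlift⟩ := hφ.hom_lift U.left ((F.map U.hom.op).obj a)
      ((F.map U.hom.op).obj a)
      (eqToHom (nat_obj_eq φ U.hom a) ≫ s ≫ eqToHom (nat_obj_eq φ U.hom a).symm)
    refine Pretopology.mem_over_toGrothendieck_of_ofArrows hg fun i => ?_
    obtain ⟨h, hh⟩ := hlift i
    refine ⟨eqToHom (res_res F (g i) U.hom a).symm ≫ h ≫ eqToHom (res_res F (g i) U.hom a), ?_⟩
    show eqToHom _ ≫ (φ.app _).map (eqToHom _ ≫ h ≫ eqToHom _) ≫ eqToHom _ =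
      eqToHom _ ≫ (G.map (g i).op).map s ≫ eqToHom _
    simp [hh, eqToHom_map]

lemma autMap_isLocallyInjective (X : C) (a : F.obj (op X)) :
    IsLocallyInjective (K.toGrothendieck.over X) (autMap φ X a) where
  equalizerSieve_mem {U} s t hst := by
    replace hst := (cancel_mono _).mp ((cancel_epi _).mp hst)
    obtain ⟨ι, V, g, hg, hsep⟩ := hφ.hom_sep U.unop.left ((F.map U.unop.hom.op).obj a)
      (s ≫ Groupoid.inv t) ((Functor.map_comp_inv_eq_id_iff _ _ _).mpr hst)
    refine Pretopology.mem_over_toGrothendieck_of_ofArrows hg fun i => ?_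
    show eqToHom _ ≫ (F.map (g i).op).map s ≫ eqToHom _ =
      eqToHom _ ≫ (F.map (g i).op).map t ≫ eqToHom _
    rw [(Functor.map_comp_inv_eq_id_iff _ _ _).mp (hsep i)]

theorem inducesIsoOnHomotopySheaves : InducesIsoOnHomotopySheaves K φ := by
  have := hφ.pi0Map_isLocallySurjective
  have := hφ.pi0Map_isLocallyInjective
  refine ⟨isIso_presheafToSheaf_map_of_isLocallyBijective _ _, fun X a => ?_⟩
  have := hφ.autMap_isLocallySurjective X a
  have := hφ.autMap_isLocallyInjective X a
  exact isIso_presheafToSheaf_map_of_isLocallyBijective _ _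

end LocalLiftingConditions

/-- The canonical map from a presheaf of groupoids to its sheafification (any map of
presheaves of groupoids whose maps of presheaves of objects and of morphisms are
sheafification maps) satisfies the local lifting conditions (L1), (L2), (L3), and
hence induces an isomorphism on sheaves of homotopy groups. -/
theorem sheafification_localLifting (K : Pretopology C) {F G : Cᵒᵖ ⥤ Grpd.{u, u}}
    (η : F ⟶ G)
    (hOb : IsSheafificationMap (K.toGrothendieck) (obMap η))
    (hMor : IsSheafificationMap (K.toGrothendieck) (morMap η)) :
    LocalLiftingConditions K η ∧ InducesIsoOnHomotopySheaves K η := by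
  have := hOb.W.isLocallyInjective
  have := hOb.W.isLocallySurjective
  have := hMor.W.isLocallyInjective
  have := hMor.W.isLocallySurjective
  have hη := localLiftingConditions_of_isLocallyBijective η K
  exact ⟨hη, hη.inducesIsoOnHomotopySheaves⟩
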